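/- Let k be a non-negative integer, P a finite propositional logic program, and U a model of the theory T₀(P). Then for every atom q ∈ M(U) there is a unique integer i with 1 ≤ i ≤ k+1 such that c(q,i) ∈ U. -/

import Mathlib

open scoped Classical

noncomputable section

/-- A propositional logic program rule: a head atom, a finite positive body and a
finite negative body. -/
structure LPRule (α : Type) where
  head : α
  pos : Finset α
  neg : Finset α
deriving DecidableEq

/-- A logic program is a finite set of rules. -/
abbrev LProgram (α : Type) := Finset (LPRule α)

variable {α : Type} [DecidableEq α]

/-- `horn r`: the Horn rule with the same head and positive body as `r`
and empty negative body. -/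
def LPRule.horn (r : LPRule α) : LPRule α := ⟨r.head, r.pos, ∅⟩

/-- A rule `r` is proper if `h(r) ∉ b⁺(r)` and `b⁺(r) ∩ b⁻(r) = ∅`. -/
def LPRule.proper (r : LPRule α) : Prop := r.head ∉ r.pos ∧ r.pos ∩ r.neg = ∅

/-- `At(P)`: the set of atoms occurring in `P`. -/
def atomsP (P : LProgram α) : Finset α := P.sup (fun r => insert r.head (r.pos ∪ r.neg))

/-- `h(P)`: the set of heads of rules of `P`. -/
def headsP (P : LProgram α) : Finset α := P.image LPRule.head

/-- `Neg(P)`: the set of atoms occurring negated in `P`. -/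
def negP (P : LProgram α) : Finset α := P.sup LPRule.neg

/-- The least model of a (Horn) program `Q`, given as a set of rules (negative bodies
are ignored; Horn rules have empty negative bodies): the least set `M` of atoms such
that `h(r) ∈ M` whenever `r ∈ Q` and `b⁺(r) ⊆ M`. -/
def LM (Q : Set (LPRule α)) : Set α :=
  ⋂₀ {M : Set α | ∀ r ∈ Q, (↑r.pos : Set α) ⊆ M → r.head ∈ M}

/-- The reduct `P^S`: delete every rule whose negative body meets `S` and remove the
negative bodies of the remaining rules. -/
def reduct (P : LProgram α) (S : Set α) : Set (LPRule α) :=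
  LPRule.horn '' {r | r ∈ P ∧ (↑r.neg : Set α) ∩ S = ∅}

/-- `M` is a stable model of `P` if `M = LM (P^M)`. -/
def isStable (P : LProgram α) (M : Set α) : Prop :=
  M = LM (reduct P M)

/-- The propositional atoms of the encoding `T(P)`: for each program atom `q`,
atoms `c(q)`, `c(q,i)`, `c⁻(q,i)` and `d(q,i)`. -/
inductive EncAtom (α : Type) where
  | c : α → EncAtom α
  | ci : α → ℕ → EncAtom α
  | cm : α → ℕ → EncAtom α
  | d : α → ℕ → EncAtom α
deriving DecidableEq

/-- `U` satisfies `F₁(q,i) = c⁻(q,i) ↔ (c(q,1) ∨ … ∨ c(q,i-1))`. -/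
def SatF1 (U : Set (EncAtom α)) (q : α) (i : ℕ) : Prop :=
  EncAtom.cm q i ∈ U ↔ ∃ j, 1 ≤ j ∧ j ≤ i - 1 ∧ EncAtom.ci q j ∈ U

/-- `U` satisfies `F₂(q) = c(q) ↔ (c(q,1) ∨ … ∨ c(q,k+1))`. -/
def SatF2 (k : ℕ) (U : Set (EncAtom α)) (q : α) : Prop :=
  EncAtom.c q ∈ U ↔ ∃ j, 1 ≤ j ∧ j ≤ k + 1 ∧ EncAtom.ci q j ∈ U

/-- `U` satisfies `F₃(r,i)`; for `i ≥ 2` this is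
`c⁻(a₁,i) ∧ … ∧ c⁻(a_s,i) ∧ ¬c(b₁) ∧ … ∧ ¬c(b_t) ∧ ¬c⁻(q,i)`, for `i = 1` it is
`false` when `b⁺(r) ≠ ∅` and `¬c(b₁) ∧ … ∧ ¬c(b_t)` when `b⁺(r) = ∅`. -/
def SatF3 (U : Set (EncAtom α)) (r : LPRule α) (i : ℕ) : Prop :=
  if i = 1 then r.pos = ∅ ∧ ∀ b ∈ r.neg, EncAtom.c b ∉ U
  else (∀ a ∈ r.pos, EncAtom.cm a i ∈ U) ∧ (∀ b ∈ r.neg, EncAtom.c b ∉ U) ∧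
    EncAtom.cm r.head i ∉ U

/-- `U` satisfies `F₄(q,i) = c(q,i) ↔ (F₃(r₁,i) ∨ … ∨ F₃(r_v,i))`, where
`r₁,…,r_v` are all rules of `P` with head `q`. -/
def SatF4 (P : LProgram α) (U : Set (EncAtom α)) (q : α) (i : ℕ) : Prop :=
  EncAtom.ci q i ∈ U ↔ ∃ r ∈ P, r.head = q ∧ SatF3 U r i

/-- `U` is a model of the theory `T₀(P)`. -/
def ModelT0 (k : ℕ) (P : LProgram α) (U : Set (EncAtom α)) : Prop :=
  (∀ q ∈ atomsP P, ∀ i, 2 ≤ i → i ≤ k + 1 → SatF1 U q i) ∧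
  (∀ q ∈ atomsP P, SatF2 k U q) ∧
  (∀ q ∈ atomsP P, ∀ i, 1 ≤ i → i ≤ k + 1 → SatF4 P U q i)

/-- `M(U) = {q ∈ At(P) : c(q) ∈ U}`. -/
def MU (P : LProgram α) (U : Set (EncAtom α)) : Finset α :=
  (atomsP P).filter (fun q => EncAtom.c q ∈ U)

/-! Call `i` a level of `q` when `c(q,i) ∈ U`. By `F₄`, a level `i ≥ 2` is only reached
through a rule whose body requires `¬c⁻(q,i)`, while by `F₁` any lower level of `q` makes
`c⁻(q,i)` true. Hence `q` has at most one level, and `F₂` supplies one when `q ∈ M(U)`. -/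

theorem cm_not_mem_of_ci_mem {α : Type} {P : LProgram α} {U : Set (EncAtom α)} {q : α} {i : ℕ}
    (hF4 : SatF4 P U q i) (hci : EncAtom.ci q i ∈ U) (hi : i ≠ 1) :
    EncAtom.cm q i ∉ U := by
  obtain ⟨r, -, rfl, hr⟩ := hF4.mp hci
  rw [SatF3, if_neg hi] at hr
  exact hr.2.2

theorem ci_not_mem_of_lt {α : Type} {P : LProgram α} {U : Set (EncAtom α)} {q : α} {i j : ℕ}
    (hF1 : SatF1 U q i) (hF4 : SatF4 P U q i) (hci : EncAtom.ci q i ∈ U)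
    (hj : 1 ≤ j) (hji : j < i) : EncAtom.ci q j ∉ U := fun hcj =>
  cm_not_mem_of_ci_mem hF4 hci (by omega) (hF1.mpr ⟨j, hj, by omega, hcj⟩)

/-- if `U` is a model of `T₀(P)`, then for every atom `q ∈ M(U)` there is
a unique `i` with `1 ≤ i ≤ k+1` such that `c(q,i) ∈ U`. -/
theorem unique_level (k : ℕ) (P : LProgram α) (U : Set (EncAtom α))
    (hU : ModelT0 k P U) (q : α) (hq : q ∈ MU P U) :
    ∃! i, 1 ≤ i ∧ i ≤ k + 1 ∧ EncAtom.ci q i ∈ U := by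
  obtain ⟨hF1, hF2, hF4⟩ := hU
  obtain ⟨hqA, hqc⟩ := Finset.mem_filter.mp hq
  have no_lower : ∀ i j, 1 ≤ i ∧ i ≤ k + 1 ∧ EncAtom.ci q i ∈ U →
      1 ≤ j ∧ j ≤ k + 1 ∧ EncAtom.ci q j ∈ U → ¬ j < i :=
    fun i j ⟨hi1, hik, hci⟩ ⟨hj1, _, hcj⟩ hji =>
      ci_not_mem_of_lt (hF1 q hqA i (by omega) hik) (hF4 q hqA i hi1 hik) hci hj1 hji hcj
  obtain ⟨i, hi⟩ := (hF2 q hqA).mp hqc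
  exact ⟨i, hi, fun j hj =>
    le_antisymm (not_lt.mp (no_lower j i hj hi)) (not_lt.mp (no_lower i j hi hj))⟩
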